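/- arXiv:2209.15024 — 4 statements merged into one kernel-verified Lean document; each statement's English description precedes it below -/
import Mathlib

section
/- Let H be a Hermitian matrix on a finite-dimensional Hilbert space with largest and smallest eigenvalues ξ_max and ξ_min. Then for any real θ with |θ| ≤ π/(ξ_max − ξ_min), the minimum over all orthogonal projectors P and unit vectors ψ in the range of P of the quantity ‖P e^{−iθH} ψ‖² equals cos²((ξ_max − ξ_min)θ/2). -/
open scoped Matrix

/-- The Euclidean norm of a finite complex vector. -/
noncomputable def euclNorm {d : ℕ} (v : Fin d → ℂ) : ℝ :=
  Real.sqrt (∑ i, Complex.normSq (v i))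

/-!
In an eigenbasis of `H`, a unit vector `ψ` with spectral weights `p k` gives
`⟨ψ, e^{-iθH} ψ⟩ = ∑ p k e^{-iθλₖ}`, a convex combination of points of the unit circle lying on
an arc of angular length `|θ|(ξmax - ξmin) ≤ π`. Rotating the midpoint of the arc to `1` and
taking real parts shows that its modulus is at least `cos (|θ|(ξmax - ξmin)/2)`. As `P` is
self-adjoint and `Pψ = ψ`, Cauchy–Schwarz gives
`‖P e^{-iθH} ψ‖ ≥ |⟨ψ, P e^{-iθH} ψ⟩| = |⟨ψ, e^{-iθH} ψ⟩|`. The bound is attained by the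
projector onto `ℂψ`, for `ψ` with spectral weight `1/2` on an eigenvector for `ξmin` and `1/2`
on one for `ξmax`, since `|(e^{ia} + e^{ib})/2| = |cos ((a - b)/2)|`.
-/

open Complex Matrix

section EuclNorm

variable {d : ℕ}

lemma euclNorm_eq_norm_toLp (v : Fin d → ℂ) : euclNorm v = ‖WithLp.toLp 2 v‖ := by
  simp [euclNorm, EuclideanSpace.norm_eq, normSq_eq_norm_sq]

lemma euclNorm_sq (v : Fin d → ℂ) : euclNorm v ^ 2 = ∑ i, normSq (v i) :=
  Real.sq_sqrt (Finset.sum_nonneg fun i _ => normSq_nonneg (v i))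

lemma star_dotProduct_self_eq_euclNorm_sq (v : Fin d → ℂ) :
    star v ⬝ᵥ v = ((euclNorm v ^ 2 : ℝ) : ℂ) := by
  rw [dotProduct_comm, ← EuclideanSpace.inner_toLp_toLp, inner_self_eq_norm_sq_to_K,
    euclNorm_eq_norm_toLp]
  push_cast
  rfl

lemma norm_star_dotProduct_le (ψ v : Fin d → ℂ) : ‖star ψ ⬝ᵥ v‖ ≤ euclNorm ψ * euclNorm v := by
  rw [dotProduct_comm, ← EuclideanSpace.inner_toLp_toLp, euclNorm_eq_norm_toLp,
    euclNorm_eq_norm_toLp]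
  exact norm_inner_le_norm _ _

lemma euclNorm_smul (a : ℂ) (v : Fin d → ℂ) : euclNorm (a • v) = ‖a‖ * euclNorm v := by
  rw [euclNorm_eq_norm_toLp, euclNorm_eq_norm_toLp, WithLp.toLp_smul, norm_smul]

lemma euclNorm_mulVec_of_conjTranspose_mul_self {A : Matrix (Fin d) (Fin d) ℂ} (hA : Aᴴ * A = 1)
    (v : Fin d → ℂ) : euclNorm (A *ᵥ v) = euclNorm v := by
  have h : ((euclNorm (A *ᵥ v) ^ 2 : ℝ) : ℂ) = ((euclNorm v ^ 2 : ℝ) : ℂ) := by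
    rw [← star_dotProduct_self_eq_euclNorm_sq, ← star_dotProduct_self_eq_euclNorm_sq, star_mulVec,
      ← dotProduct_mulVec, mulVec_mulVec, hA, one_mulVec]
  exact (sq_eq_sq₀ (Real.sqrt_nonneg _) (Real.sqrt_nonneg _)).1 (ofReal_injective h)

end EuclNorm

section Projector

variable {d : ℕ}

lemma star_dotProduct_mulVec_of_isHermitian {P : Matrix (Fin d) (Fin d) ℂ} (hP : P.IsHermitian)
    {ψ : Fin d → ℂ} (hψ : P *ᵥ ψ = ψ) (v : Fin d → ℂ) : star ψ ⬝ᵥ (P *ᵥ v) = star ψ ⬝ᵥ v := by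
  rw [dotProduct_mulVec, ← hP.eq, ← star_mulVec, hψ]

lemma norm_star_dotProduct_le_euclNorm_mulVec {P : Matrix (Fin d) (Fin d) ℂ}
    (hP : P.IsHermitian) {ψ : Fin d → ℂ} (hψ : P *ᵥ ψ = ψ) (hψ1 : euclNorm ψ = 1)
    (v : Fin d → ℂ) : ‖star ψ ⬝ᵥ v‖ ≤ euclNorm (P *ᵥ v) := by
  simpa [star_dotProduct_mulVec_of_isHermitian hP hψ, hψ1] using
    norm_star_dotProduct_le ψ (P *ᵥ v)

lemma vecMulVec_star_mulVec (ψ v : Fin d → ℂ) :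
    vecMulVec ψ (star ψ) *ᵥ v = (star ψ ⬝ᵥ v) • ψ := by
  rw [vecMulVec_mulVec, op_smul_eq_smul]

lemma isHermitian_vecMulVec_star (ψ : Fin d → ℂ) : (vecMulVec ψ (star ψ)).IsHermitian := by
  rw [IsHermitian, conjTranspose_vecMulVec, star_star]

lemma vecMulVec_star_mulVec_self {ψ : Fin d → ℂ} (hψ1 : euclNorm ψ = 1) :
    vecMulVec ψ (star ψ) *ᵥ ψ = ψ := by
  rw [vecMulVec_star_mulVec, star_dotProduct_self_eq_euclNorm_sq, hψ1]
  simp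

lemma vecMulVec_star_mul_self {ψ : Fin d → ℂ} (hψ1 : euclNorm ψ = 1) :
    vecMulVec ψ (star ψ) * vecMulVec ψ (star ψ) = vecMulVec ψ (star ψ) := by
  rw [vecMulVec_mul_vecMulVec, star_dotProduct_self_eq_euclNorm_sq, hψ1]
  simp

lemma euclNorm_vecMulVec_star_mulVec {ψ : Fin d → ℂ} (hψ1 : euclNorm ψ = 1) (v : Fin d → ℂ) :
    euclNorm (vecMulVec ψ (star ψ) *ᵥ v) = ‖star ψ ⬝ᵥ v‖ := by
  rw [vecMulVec_star_mulVec, euclNorm_smul, hψ1, mul_one]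

end Projector

lemma cos_le_norm_sum_mul_exp {ι : Type*} [Fintype ι] {p t : ι → ℝ} (hp : ∀ k, 0 ≤ p k)
    (hp1 : ∑ k, p k = 1) {c r : ℝ} (ht : ∀ k, |t k - c| ≤ r) (hr : r ≤ Real.pi) :
    Real.cos r ≤ ‖∑ k, (p k : ℂ) * exp (t k * I)‖ := by
  have hterm (k : ι) : Real.cos r ≤ Real.cos (t k - c) := by
    rw [← Real.cos_abs (t k - c)]
    exact Real.cos_le_cos_of_nonneg_of_le_pi (abs_nonneg _) hr (ht k)
  have hre : (exp (-c * I) * ∑ k, (p k : ℂ) * exp (t k * I)).re =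
      ∑ k, p k * Real.cos (t k - c) := by
    rw [Finset.mul_sum, re_sum]
    refine Finset.sum_congr rfl fun k _ => ?_
    rw [mul_left_comm, ← exp_add,
      show -c * I + t k * I = ((t k - c : ℝ) : ℂ) * I by push_cast; ring,
      re_ofReal_mul, exp_ofReal_mul_I_re]
  calc Real.cos r = ∑ k, p k * Real.cos r := by rw [← Finset.sum_mul, hp1, one_mul]
    _ ≤ ∑ k, p k * Real.cos (t k - c) :=
      Finset.sum_le_sum fun k _ => mul_le_mul_of_nonneg_left (hterm k) (hp k)
    _ ≤ ‖exp (-c * I) * ∑ k, (p k : ℂ) * exp (t k * I)‖ := hre ▸ re_le_norm _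
    _ = ‖∑ k, (p k : ℂ) * exp (t k * I)‖ := by
      rw [norm_mul, ← ofReal_neg, norm_exp_ofReal_mul_I, one_mul]

lemma norm_exp_add_exp_div_two (a b : ℝ) :
    ‖(exp (a * I) + exp (b * I)) / 2‖ = |Real.cos ((a - b) / 2)| := by
  have h : (exp (a * I) + exp (b * I)) / 2 =
      exp (((a + b) / 2 : ℝ) * I) * ((a - b) / 2 : ℝ).cos := by
    rw [ofReal_cos, cos, mul_div_assoc', mul_add, ← exp_add, ← exp_add]
    push_cast
    ring_nf
  rw [h, norm_mul, norm_exp_ofReal_mul_I, one_mul, norm_real, Real.norm_eq_abs]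

lemma exp_neg_ofReal_mul_I_mul_ofReal (θ x : ℝ) :
    exp (-(θ : ℂ) * I * x) = exp (↑(-(θ * x)) * I) := by
  push_cast
  ring_nf

lemma star_dotProduct_diagonal_mulVec {n : Type*} [Fintype n] [DecidableEq n] (f v : n → ℂ) :
    star v ⬝ᵥ (diagonal f *ᵥ v) = ∑ k, (normSq (v k) : ℂ) * f k := by
  refine Finset.sum_congr rfl fun k _ => ?_
  rw [mulVec_diagonal, Pi.star_apply, RCLike.star_def, normSq_eq_conj_mul_self]
  ring

lemma star_vecMul_eq_star_star_mulVec {n : Type*} [Fintype n] (A : Matrix n n ℂ) (v : n → ℂ) :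
    star v ᵥ* A = star (star A *ᵥ v) := by
  rw [star_mulVec, star_eq_conjTranspose, conjTranspose_conjTranspose]

namespace Matrix.IsHermitian

variable {d : ℕ} {H : Matrix (Fin d) (Fin d) ℂ} (hH : H.IsHermitian)

local notation "U" => (hH.eigenvectorUnitary : Matrix (Fin d) (Fin d) ℂ)

lemma exp_smul_eq (z : ℂ) :
    NormedSpace.exp (z • H) =
      U * diagonal (fun k => Complex.exp (z * (hH.eigenvalues k : ℂ))) * star U := by
  have hinv : U⁻¹ = star U := inv_eq_left_inv (Unitary.coe_star_mul_self _)
  have hzH : z • H = U * diagonal (fun k => z * (hH.eigenvalues k : ℂ)) * U⁻¹ := by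
    conv_lhs => rw [hH.spectral_theorem, Unitary.conjStarAlgAut_apply]
    rw [hinv, ← Matrix.smul_mul, ← Matrix.mul_smul, ← diagonal_smul]
    rfl
  rw [hzH, exp_conj _ _ Unitary.isUnit_coe, exp_diagonal, hinv]
  congr 3
  ext k
  rw [Pi.exp_def, ← Complex.exp_eq_exp_ℂ]

lemma star_dotProduct_exp_smul_mulVec (z : ℂ) (ψ : Fin d → ℂ) :
    star ψ ⬝ᵥ (NormedSpace.exp (z • H) *ᵥ ψ) =
      ∑ k, (normSq ((star U *ᵥ ψ) k) : ℂ) * Complex.exp (z * (hH.eigenvalues k : ℂ)) := by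
  rw [exp_smul_eq hH, ← mulVec_mulVec, ← mulVec_mulVec, dotProduct_mulVec,
    star_vecMul_eq_star_star_mulVec, star_dotProduct_diagonal_mulVec]

lemma euclNorm_star_eigenvectorUnitary_mulVec (ψ : Fin d → ℂ) :
    euclNorm (star U *ᵥ ψ) = euclNorm ψ := by
  refine euclNorm_mulVec_of_conjTranspose_mul_self ?_ ψ
  rw [← star_eq_conjTranspose, star_star, Unitary.mul_star_self_of_mem hH.eigenvectorUnitary.2]

lemma cos_le_norm_star_dotProduct_exp_mulVec {a b : ℝ} (ha : ∀ k, a ≤ hH.eigenvalues k)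
    (hb : ∀ k, hH.eigenvalues k ≤ b) {θ : ℝ} (hθ : |θ| * (b - a) ≤ 2 * Real.pi)
    {ψ : Fin d → ℂ} (hψ1 : euclNorm ψ = 1) :
    Real.cos (|θ| * (b - a) / 2) ≤
      ‖star ψ ⬝ᵥ (NormedSpace.exp ((-(θ : ℂ) * I) • H) *ᵥ ψ)‖ := by
  have hweights : ∑ k, normSq ((star U *ᵥ ψ) k) = 1 := by
    rw [← euclNorm_sq, euclNorm_star_eigenvectorUnitary_mulVec, hψ1, one_pow]
  have hspread (k : Fin d) :
      |-(θ * hH.eigenvalues k) - -(θ * ((a + b) / 2))| ≤ |θ| * (b - a) / 2 := by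
    rw [show -(θ * hH.eigenvalues k) - -(θ * ((a + b) / 2)) =
        θ * ((a + b) / 2 - hH.eigenvalues k) by ring, abs_mul, mul_div_assoc]
    exact mul_le_mul_of_nonneg_left
      (abs_le.2 ⟨by linarith [hb k], by linarith [ha k]⟩) (abs_nonneg θ)
  rw [star_dotProduct_exp_smul_mulVec]
  simp_rw [exp_neg_ofReal_mul_I_mul_ofReal]
  exact cos_le_norm_sum_mul_exp (fun _ => normSq_nonneg _) hweights hspread (by linarith)

lemma exists_euclNorm_eq_one_and_star_dotProduct_exp_smul_mulVec (k l : Fin d) (z : ℂ) :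
    ∃ ψ : Fin d → ℂ, euclNorm ψ = 1 ∧ star ψ ⬝ᵥ (NormedSpace.exp (z • H) *ᵥ ψ) =
      (Complex.exp (z * (hH.eigenvalues k : ℂ)) + Complex.exp (z * (hH.eigenvalues l : ℂ))) / 2 := by
  -- spectral weights `1/2` at `k` and at `l`, which is a single weight `1` when `k = l`
  set w : Fin d → ℝ := fun j => ((if j = k then 1 else 0) + (if j = l then 1 else 0)) / 2
  set c : Fin d → ℂ := fun j => (Real.sqrt (w j) : ℂ)
  have hc (j : Fin d) : normSq (c j) = w j := by
    rw [normSq_ofReal, Real.mul_self_sqrt (by positivity)]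
  have hcU : star U *ᵥ (U *ᵥ c) = c := by
    rw [mulVec_mulVec, Unitary.coe_star_mul_self, one_mulVec]
  refine ⟨U *ᵥ c, ?_, ?_⟩
  · rw [← euclNorm_star_eigenvectorUnitary_mulVec hH, hcU, euclNorm,
      Finset.sum_congr rfl fun j _ => hc j]
    simp [w, Finset.sum_add_distrib, ← Finset.sum_div]
  · rw [star_dotProduct_exp_smul_mulVec hH, hcU, Finset.sum_congr rfl fun j _ => by rw [hc j]]
    simp [w, apply_ite ((↑) : ℝ → ℂ), add_div, add_mul, Finset.sum_add_distrib, ite_div, ite_mul]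
    ring

lemma exists_euclNorm_eq_one_and_norm_star_dotProduct_exp_mulVec (k l : Fin d) (θ : ℝ) :
    ∃ ψ : Fin d → ℂ, euclNorm ψ = 1 ∧
      ‖star ψ ⬝ᵥ (NormedSpace.exp ((-(θ : ℂ) * I) • H) *ᵥ ψ)‖ =
        |Real.cos ((hH.eigenvalues l - hH.eigenvalues k) * θ / 2)| := by
  obtain ⟨ψ, hψ1, hψ⟩ :=
    exists_euclNorm_eq_one_and_star_dotProduct_exp_smul_mulVec hH k l (-(θ : ℂ) * I)
  refine ⟨ψ, hψ1, ?_⟩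
  rw [hψ, exp_neg_ofReal_mul_I_mul_ofReal, exp_neg_ofReal_mul_I_mul_ofReal,
    norm_exp_add_exp_div_two]
  congr 2
  ring

end Matrix.IsHermitian

/-- **Lemma 1.** For a Hermitian matrix `H` with smallest and largest eigenvalues
`ξmin` and `ξmax`, and any real `θ` with `|θ| ≤ π / (ξmax - ξmin)`, the minimum over all
orthogonal projectors `P` and unit vectors `ψ` in the range of `P` of
`‖P e^{-iθH} ψ‖²` equals `cos²((ξmax - ξmin) θ / 2)`. -/
theorem zeno_one_step_min {d : ℕ} (H : Matrix (Fin d) (Fin d) ℂ) (hH : H.IsHermitian)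
    (ξmin ξmax : ℝ)
    (hmin : IsLeast (Set.range hH.eigenvalues) ξmin)
    (hmax : IsGreatest (Set.range hH.eigenvalues) ξmax)
    (θ : ℝ) (hθ : |θ| ≤ Real.pi / (ξmax - ξmin)) :
    IsLeast
      {x : ℝ | ∃ (P : Matrix (Fin d) (Fin d) ℂ) (ψ : Fin d → ℂ),
        P.IsHermitian ∧ P * P = P ∧ P.mulVec ψ = ψ ∧ euclNorm ψ = 1 ∧
        x = (euclNorm (P.mulVec ((NormedSpace.exp ((-(θ : ℂ) * Complex.I) • H)).mulVec ψ))) ^ 2}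
      (Real.cos ((ξmax - ξmin) * θ / 2) ^ 2) := by
  obtain ⟨k, hk⟩ := hmin.1
  obtain ⟨l, hl⟩ := hmax.1
  have hΔ : 0 ≤ ξmax - ξmin := sub_nonneg.2 (hmin.2 hmax.1)
  have hθΔ : |θ| * (ξmax - ξmin) ≤ Real.pi := by
    rcases hΔ.eq_or_lt with h | h
    · rw [← h, mul_zero]
      exact Real.pi_pos.le
    · exact (le_div_iff₀ h).1 hθ
  have hcos : Real.cos ((ξmax - ξmin) * θ / 2) = Real.cos (|θ| * (ξmax - ξmin) / 2) := by
    rw [← Real.cos_abs, abs_div, abs_mul, abs_of_nonneg hΔ, abs_two, mul_comm]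
  have hcos_nonneg : 0 ≤ Real.cos ((ξmax - ξmin) * θ / 2) :=
    hcos ▸ Real.cos_nonneg_of_mem_Icc
      ⟨by linarith [Real.pi_pos, mul_nonneg (abs_nonneg θ) hΔ], by linarith⟩
  constructor
  · obtain ⟨ψ, hψ1, hψ⟩ := hH.exists_euclNorm_eq_one_and_norm_star_dotProduct_exp_mulVec k l θ
    refine ⟨_, ψ, isHermitian_vecMulVec_star ψ, vecMulVec_star_mul_self hψ1,
      vecMulVec_star_mulVec_self hψ1, hψ1, ?_⟩
    rw [euclNorm_vecMulVec_star_mulVec hψ1, hψ, hk, hl, sq_abs]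
  · rintro _ ⟨P, ψ, hP, -, hPψ, hψ1, rfl⟩
    refine pow_le_pow_left₀ hcos_nonneg ?_ 2
    calc Real.cos ((ξmax - ξmin) * θ / 2) = Real.cos (|θ| * (ξmax - ξmin) / 2) := hcos
      _ ≤ ‖star ψ ⬝ᵥ (NormedSpace.exp ((-(θ : ℂ) * I) • H) *ᵥ ψ)‖ :=
        hH.cos_le_norm_star_dotProduct_exp_mulVec (fun j => hmin.2 ⟨j, rfl⟩)
          (fun j => hmax.2 ⟨j, rfl⟩) (by linarith [Real.pi_pos]) hψ1
      _ ≤ _ := norm_star_dotProduct_le_euclNorm_mulVec hP hPψ hψ1 _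
end

section
/- Let ξ_1 < ... < ξ_d be reals and θ ∈ ℝ with |θ| ≤ π/(ξ_d − ξ_1). Let C_{jk} = cos(θ(ξ_j − ξ_k)). Then the minimum of xᵀCx over the probability simplex {x ∈ ℝ^d : x_j ≥ 0, Σ_j x_j = 1} equals cos²((ξ_d − ξ_1)θ/2), attained at the vector with mass 1/2 on indices 1 and d. -/
/-- Minimization of the cosine Gram quadratic form over the probability simplex:
the minimum of `xᵀCx` over `{x : x_j ≥ 0, Σ x_j = 1}` equals `cos²((ξ_d - ξ_1)θ/2)`,
attained at the vector with mass `1/2` on the first and last indices. -/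
theorem cos_gram_simplex_min {n : ℕ} (ξ : Fin (n + 1) → ℝ) (hξ : StrictMono ξ)
    (θ : ℝ) (hθ : |θ| ≤ Real.pi / (ξ (Fin.last n) - ξ 0))
    (C : Matrix (Fin (n + 1)) (Fin (n + 1)) ℝ)
    (hC : C = Matrix.of fun j k => Real.cos (θ * (ξ j - ξ k)))
    (xstar : Fin (n + 1) → ℝ)
    (hxstar : xstar = fun j =>
      (if j = 0 then (1 : ℝ) / 2 else 0) + (if j = Fin.last n then (1 : ℝ) / 2 else 0)) :
    IsLeast
      {y : ℝ | ∃ x : Fin (n + 1) → ℝ, (∀ j, 0 ≤ x j) ∧ (∑ j, x j) = 1 ∧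
        y = ∑ j, ∑ k, C j k * x j * x k}
      (Real.cos ((ξ (Fin.last n) - ξ 0) * θ / 2) ^ 2)
    ∧ (∑ j, ∑ k, C j k * xstar j * xstar k)
        = Real.cos ((ξ (Fin.last n) - ξ 0) * θ / 2) ^ 2 := by
  subst hC hxstar
  simp only [Matrix.of_apply]
  set L := Fin.last n with hL
  set Δ := ξ L - ξ 0 with hΔ
  set m := (ξ 0 + ξ L) / 2 with hm
  clear_value L Δ m
  have hΔ0 : 0 ≤ Δ := by rw [hΔ, hL]; exact sub_nonneg.mpr (hξ.monotone (Fin.le_last 0))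
  have hθΔ : |θ| * Δ ≤ Real.pi := by
    rcases eq_or_lt_of_le hΔ0 with h | h
    · rw [← h, mul_zero]; exact Real.pi_nonneg
    · rw [← le_div_iff₀ h]; exact hθ
  have h2 : |Δ * θ / 2| = |θ| * Δ / 2 := by
    rw [abs_div, abs_mul, abs_of_nonneg hΔ0, abs_two]; ring
  have hcosφ : 0 ≤ Real.cos (Δ * θ / 2) := by
    rw [← Real.cos_abs]
    apply Real.cos_nonneg_of_mem_Icc
    constructor
    · have := abs_nonneg (Δ * θ / 2)
      have := Real.pi_nonneg
      linarith
    · rw [h2]; linarith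
  -- key identity
  have key : ∀ x : Fin (n + 1) → ℝ,
      ∑ j, ∑ k, Real.cos (θ * (ξ j - ξ k)) * x j * x k
        = (∑ j, x j * Real.cos (θ * (ξ j - m))) ^ 2
          + (∑ j, x j * Real.sin (θ * (ξ j - m))) ^ 2 := by
    intro x
    rw [sq, sq, Finset.sum_mul_sum, Finset.sum_mul_sum, ← Finset.sum_add_distrib]
    refine Finset.sum_congr rfl fun j _ => ?_
    rw [← Finset.sum_add_distrib]
    refine Finset.sum_congr rfl fun k _ => ?_
    have h1 : θ * (ξ j - ξ k) = θ * (ξ j - m) - θ * (ξ k - m) := by ring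
    rw [h1, Real.cos_sub]; ring
  -- pointwise cosine bound
  have hpt : ∀ j : Fin (n + 1), Real.cos (Δ * θ / 2) ≤ Real.cos (θ * (ξ j - m)) := by
    intro j
    rw [← Real.cos_abs (Δ * θ / 2), ← Real.cos_abs (θ * (ξ j - m))]
    have hj1 : ξ 0 ≤ ξ j := hξ.monotone (Fin.zero_le j)
    have hj2 : ξ j ≤ ξ L := by rw [hL]; exact hξ.monotone (Fin.le_last j)
    have hjm : |ξ j - m| ≤ Δ / 2 := by
      rw [abs_le]
      constructor <;> (rw [hm, hΔ]; rw [hm] at *; linarith)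
    apply Real.cos_le_cos_of_nonneg_of_le_pi (abs_nonneg _)
    · rw [h2]; linarith [Real.pi_nonneg]
    · rw [abs_mul, h2]
      calc |θ| * |ξ j - m| ≤ |θ| * (Δ / 2) :=
            mul_le_mul_of_nonneg_left hjm (abs_nonneg θ)
        _ = |θ| * Δ / 2 := by ring
  -- sums against xstar
  have hsum1 : ∀ g : Fin (n + 1) → ℝ,
      (∑ k, g k * ((if k = 0 then (1 : ℝ) / 2 else 0) + (if k = L then (1 : ℝ) / 2 else 0)))
        = g 0 / 2 + g L / 2 := by
    intro g
    simp [mul_add, mul_ite, mul_zero, Finset.sum_add_distrib, Finset.sum_ite_eq']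
    ring
  -- value at xstar
  have hval : (∑ j, ∑ k, Real.cos (θ * (ξ j - ξ k)) *
        ((if j = 0 then (1 : ℝ) / 2 else 0) + (if j = L then (1 : ℝ) / 2 else 0)) *
        ((if k = 0 then (1 : ℝ) / 2 else 0) + (if k = L then (1 : ℝ) / 2 else 0)))
      = Real.cos (Δ * θ / 2) ^ 2 := by
    have e1 : ∀ j : Fin (n + 1),
        (∑ k, Real.cos (θ * (ξ j - ξ k)) *
          ((if j = 0 then (1 : ℝ) / 2 else 0) + (if j = L then (1 : ℝ) / 2 else 0)) *
          ((if k = 0 then (1 : ℝ) / 2 else 0) + (if k = L then (1 : ℝ) / 2 else 0)))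
        = (Real.cos (θ * (ξ j - ξ 0)) / 2 + Real.cos (θ * (ξ j - ξ L)) / 2) *
          ((if j = 0 then (1 : ℝ) / 2 else 0) + (if j = L then (1 : ℝ) / 2 else 0)) := by
      intro j
      have := hsum1 (fun k => Real.cos (θ * (ξ j - ξ k)) *
        ((if j = 0 then (1 : ℝ) / 2 else 0) + (if j = L then (1 : ℝ) / 2 else 0)))
      rw [this]; ring
    rw [Finset.sum_congr rfl fun j _ => e1 j,
      hsum1 (fun j => Real.cos (θ * (ξ j - ξ 0)) / 2 + Real.cos (θ * (ξ j - ξ L)) / 2)]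
    simp only [sub_self, mul_zero, Real.cos_zero]
    have hc1 : θ * (ξ 0 - ξ L) = -(Δ * θ) := by rw [hΔ]; ring
    have hc2 : θ * (ξ L - ξ 0) = Δ * θ := by rw [hΔ]; ring
    rw [hc1, hc2, Real.cos_neg, Real.cos_sq]
    ring_nf
  refine ⟨⟨⟨fun j => (if j = 0 then (1 : ℝ) / 2 else 0) + (if j = L then (1 : ℝ) / 2 else 0),
      ?_, ?_, hval.symm⟩, ?_⟩, hval⟩
  · intro j; dsimp only; split_ifs <;> norm_num
  · simp [Finset.sum_add_distrib, Finset.sum_ite_eq']; norm_num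
  · rintro y ⟨x, hx0, hx1, rfl⟩
    rw [key x]
    have ha : Real.cos (Δ * θ / 2) ≤ ∑ j, x j * Real.cos (θ * (ξ j - m)) := by
      calc Real.cos (Δ * θ / 2) = ∑ j, x j * Real.cos (Δ * θ / 2) := by
            rw [← Finset.sum_mul, hx1, one_mul]
        _ ≤ ∑ j, x j * Real.cos (θ * (ξ j - m)) :=
            Finset.sum_le_sum fun j _ => mul_le_mul_of_nonneg_left (hpt j) (hx0 j)
    have hsq : Real.cos (Δ * θ / 2) ^ 2 ≤ (∑ j, x j * Real.cos (θ * (ξ j - m))) ^ 2 :=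
      pow_le_pow_left₀ hcosφ ha 2
    nlinarith [sq_nonneg (∑ j, x j * Real.sin (θ * (ξ j - m)))]
end

section
/- Let ξ_1 < ... < ξ_d be reals, θ ∈ ℝ with |θ| ≤ π/(ξ_d − ξ_1), and j ∈ {1,...,d}. Then 2cos²((ξ_d − ξ_1)θ/2) ≤ cos(θ(ξ_d − ξ_j)) + cos(θ(ξ_j − ξ_1)). -/
lemma cos_gram_key_aux (a b θ : ℝ) (hA : 0 ≤ a) (hAθ : |a * θ| ≤ Real.pi)
    (hB : |b| ≤ a) :
    2 * Real.cos (a * θ / 2) ^ 2 ≤ 2 * Real.cos (a * θ / 2) * Real.cos (b * θ / 2) := by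
  have hBθ : |b * θ| ≤ |a * θ| := by
    rw [abs_mul, abs_mul]
    exact mul_le_mul_of_nonneg_right (hB.trans_eq (abs_of_nonneg hA).symm) (abs_nonneg θ)
  have hc : 0 ≤ Real.cos (a * θ / 2) := by
    apply Real.cos_nonneg_of_mem_Icc
    constructor
    · have := neg_abs_le (a * θ); linarith
    · have := le_abs_self (a * θ); linarith
  have hcc : Real.cos (a * θ / 2) ≤ Real.cos (b * θ / 2) := by
    rw [← Real.cos_abs (a * θ / 2), ← Real.cos_abs (b * θ / 2)]
    apply Real.cos_le_cos_of_nonneg_of_le_pi (abs_nonneg _)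
    · rw [abs_div, abs_two]; linarith [Real.pi_nonneg]
    · rw [abs_div, abs_div, abs_two]; linarith
  calc 2 * Real.cos (a * θ / 2) ^ 2
      = 2 * Real.cos (a * θ / 2) * Real.cos (a * θ / 2) := by ring
    _ ≤ 2 * Real.cos (a * θ / 2) * Real.cos (b * θ / 2) := by
        apply mul_le_mul_of_nonneg_left hcc; linarith

/-- Key optimality inequality:
`2cos²((ξ_d - ξ_1)θ/2) ≤ cos(θ(ξ_d - ξ_j)) + cos(θ(ξ_j - ξ_1))`
for `|θ| ≤ π/(ξ_d - ξ_1)`. -/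
theorem cos_gram_key_inequality {n : ℕ} (ξ : Fin (n + 1) → ℝ) (hξ : StrictMono ξ)
    (θ : ℝ) (hθ : |θ| ≤ Real.pi / (ξ (Fin.last n) - ξ 0)) (j : Fin (n + 1)) :
    2 * Real.cos ((ξ (Fin.last n) - ξ 0) * θ / 2) ^ 2 ≤
      Real.cos (θ * (ξ (Fin.last n) - ξ j)) + Real.cos (θ * (ξ j - ξ 0)) := by
  have h0j : ξ 0 ≤ ξ j := hξ.monotone (Fin.zero_le j)
  have hjl : ξ j ≤ ξ (Fin.last n) := hξ.monotone (Fin.le_last j)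
  have hA : 0 ≤ ξ (Fin.last n) - ξ 0 := by linarith
  have hAθ : |(ξ (Fin.last n) - ξ 0) * θ| ≤ Real.pi := by
    rcases eq_or_lt_of_le hA with h | h
    · rw [← h]; simpa using Real.pi_nonneg
    · rw [abs_mul, abs_of_nonneg hA]
      calc (ξ (Fin.last n) - ξ 0) * |θ|
          ≤ (ξ (Fin.last n) - ξ 0) * (Real.pi / (ξ (Fin.last n) - ξ 0)) :=
            mul_le_mul_of_nonneg_left hθ hA
        _ = Real.pi := by field_simp
  have hB : |ξ (Fin.last n) + ξ 0 - 2 * ξ j| ≤ ξ (Fin.last n) - ξ 0 := by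
    rw [abs_le]; constructor <;> linarith
  have hsum : Real.cos (θ * (ξ (Fin.last n) - ξ j)) + Real.cos (θ * (ξ j - ξ 0))
      = 2 * Real.cos ((ξ (Fin.last n) - ξ 0) * θ / 2)
        * Real.cos ((ξ (Fin.last n) + ξ 0 - 2 * ξ j) * θ / 2) := by
    rw [Real.cos_add_cos]; ring_nf
  rw [hsum]
  exact cos_gram_key_aux _ _ _ hA hAθ hB
end

section
/- Parameter-shift rule for Zeno circuits: let the Zeno-augmented evolution be 𝒰_Z(θ) containing N_r repetitions of e^{−i(θ_r/N_r)H_r} interleaved with a fixed channel 𝒫, where H_r is Hermitian and unitary (H_r² = I). Then ∂/∂θ_r Tr[M 𝒰_Z(θ)ρ𝒰_Z†(θ)] = (1/N_r) Σ_{k=1}^{N_r} [Tr(M 𝒰_Z^{+(r,k)} ρ 𝒰_Z^{†,+(r,k)}) − Tr(M 𝒰_Z^{−(r,k)} ρ 𝒰_Z^{†,−(r,k)})], where 𝒰_Z^{±(r,k)} is 𝒰_Z with the k-th occurrence of the θ_r-evolution shifted in angle by ±π/(4N_r)·2 (i.e., the standard π/2 shift applied to the effective half-angle). -/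
/-!
For `H * H = 1` the gate `exp (-i a H)` equals `cos a - i sin a H`, so one Zeno step
`σ ↦ 𝒫 (U_a σ U_a†)` is a trigonometric polynomial `P + cos 2a • Q + sin 2a • R` in `a` with
linear-map coefficients. For such a family the `a`-derivative is the difference of its values at
`a ± π/4`. Differentiating the circuit along the diagonal (all angles equal) with the product
rule therefore yields one shifted difference per occurrence of the angle, and the chain rule for
`a = θ / N` contributes the factor `1 / N`.
-/

open scoped Real
open Complex
open scoped Matrix

section Rotation

variable {A : Type*} [Ring A] [Algebra ℂ A]

noncomputable def rotationGate (H : A) (a : ℝ) : A :=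
  (Real.cos a : ℂ) • 1 - ((Real.sin a : ℂ) * I) • H

section Exp

variable [TopologicalSpace A] [IsTopologicalRing A] [ContinuousSMul ℂ A] [T2Space A]

theorem exp_smul_of_mul_self_eq_one {H : A} (hH : H * H = 1) (z : ℂ) :
    NormedSpace.exp (z • H) = cosh z • (1 : A) + sinh z • H := by
  have hpow : ∀ k, H ^ (2 * k) = 1 := fun k => by rw [pow_mul, sq, hH, one_pow]
  rw [NormedSpace.exp_eq_tsum ℂ]
  refine HasSum.tsum_eq (HasSum.even_add_odd ?_ ?_)
  · convert (hasSum_cosh z).smul_const (1 : A) using 2 with k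
    rw [smul_pow, hpow, smul_smul, div_eq_inv_mul]
  · convert (hasSum_sinh z).smul_const H using 2 with k
    rw [smul_pow, pow_succ H, hpow, one_mul, smul_smul, div_eq_inv_mul]

theorem exp_neg_mul_I_smul_eq_rotationGate {H : A} (hH : H * H = 1) (a : ℝ) :
    NormedSpace.exp ((-(a : ℂ) * I) • H) = rotationGate H a := by
  rw [exp_smul_of_mul_self_eq_one hH, cosh_mul_I, sinh_mul_I, cos_neg, sin_neg, rotationGate,
    ← ofReal_cos, ← ofReal_sin, neg_mul, neg_smul, sub_eq_add_neg]

end Exp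

section Star

variable [StarRing A] [StarModule ℂ A]

theorem rotationGate_mul_mul_star {H : A} (hH : IsSelfAdjoint H) (a : ℝ) (m : A) :
    rotationGate H a * m * star (rotationGate H a) =
      (2⁻¹ : ℂ) • (m + H * m * H) + (Real.cos (2 * a) : ℂ) • (2⁻¹ : ℂ) • (m - H * m * H)
        + (Real.sin (2 * a) : ℂ) • (I / 2) • (m * H - H * m) := by
  simp only [rotationGate, star_sub, star_smul, star_one, hH.star_eq, Complex.star_def,
    map_mul, conj_ofReal, conj_I, sub_mul, mul_sub, smul_mul_assoc, mul_smul_comm, one_mul, mul_one,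
    smul_sub, smul_add, smul_smul, Real.cos_two_mul, Real.sin_two_mul]
  push_cast
  match_scalars <;> ring_nf
  all_goals linear_combination (-sin (a : ℂ) ^ 2) * I_sq + sin_sq_add_cos_sq (a : ℂ)

end Star

end Rotation

section Circuit

variable {V : Type*}

def circuit (Φ : ℝ → V → V) {n : ℕ} (θ : Fin n → ℝ) (v : V) : V :=
  Fin.foldl n (fun w j => Φ (θ j) w) v

def shiftedAt {n : ℕ} (t δ : ℝ) (k : Fin n) : Fin n → ℝ :=
  fun j => t + if j = k then δ else 0

variable (Φ : ℝ → V → V)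

theorem circuit_succ {n : ℕ} (θ : Fin (n + 1) → ℝ) (v : V) :
    circuit Φ θ v = Φ (θ (Fin.last n)) (circuit Φ (fun j => θ j.castSucc) v) :=
  Fin.foldl_succ_last ..

theorem circuit_shiftedAt_castSucc {n : ℕ} (t δ : ℝ) (k : Fin n) (v : V) :
    circuit Φ (shiftedAt t δ k.castSucc) v = Φ t (circuit Φ (shiftedAt t δ k) v) := by
  rw [circuit_succ]
  congr 2
  · simp [shiftedAt, (Fin.castSucc_lt_last k).ne']
  · ext j
    simp [shiftedAt]

theorem circuit_shiftedAt_last {n : ℕ} (t δ : ℝ) (v : V) :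
    circuit Φ (shiftedAt t δ (Fin.last n)) v = Φ (t + δ) (circuit Φ (fun _ : Fin n => t) v) := by
  simp [circuit_succ, shiftedAt, (Fin.castSucc_lt_last _).ne]

end Circuit

section ParameterShift

variable {V F : Type*} [AddCommGroup V] [Module ℝ V] [NormedAddCommGroup F] [NormedSpace ℝ F]

def HasDoubleAngleForm (Φ : ℝ → V →ₗ[ℝ] V) : Prop :=
  ∃ P Q R : V →ₗ[ℝ] V, ∀ a, Φ a = P + Real.cos (2 * a) • Q + Real.sin (2 * a) • R

variable {Φ : ℝ → V →ₗ[ℝ] V}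

theorem hasDerivAt_apply_apply_of_doubleAngle {P Q R : V →ₗ[ℝ] V}
    (hΦ : ∀ a, Φ a = P + Real.cos (2 * a) • Q + Real.sin (2 * a) • R)
    {g : ℝ → V} {g' : V} {t : ℝ} (hg : ∀ ℓ : V →ₗ[ℝ] F, HasDerivAt (fun s => ℓ (g s)) (ℓ g') t)
    (ℓ : V →ₗ[ℝ] F) :
    HasDerivAt (fun s => ℓ (Φ s (g s)))
      (ℓ (Φ (t + π / 4) (g t)) - ℓ (Φ (t - π / 4) (g t)) + ℓ (Φ t g')) t := by
  have hlin : HasDerivAt (fun x : ℝ => 2 * x) 2 t := by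
    simpa using (hasDerivAt_id t).const_mul 2
  have h := ((hg (ℓ ∘ₗ P)).add (hlin.cos.smul (hg (ℓ ∘ₗ Q)))).add (hlin.sin.smul (hg (ℓ ∘ₗ R)))
  simp only [hΦ, LinearMap.add_apply, LinearMap.smul_apply, map_add, map_smul] at h ⊢
  refine h.congr_deriv ?_
  have hplus : 2 * (t + π / 4) = 2 * t + π / 2 := by ring
  have hminus : 2 * (t - π / 4) = 2 * t - π / 2 := by ring
  simp only [LinearMap.comp_apply, hplus, hminus, Real.cos_add_pi_div_two,
    Real.cos_sub_pi_div_two, Real.sin_add_pi_div_two, Real.sin_sub_pi_div_two]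
  module

/- Derivatives are taken after an arbitrary real-linear map `ℓ` into a normed space, so that the
state space `V` needs no norm. -/
theorem hasDerivAt_apply_circuit_const (hΦ : HasDoubleAngleForm Φ) (n : ℕ) (v : V) (t : ℝ)
    (ℓ : V →ₗ[ℝ] F) :
    HasDerivAt (fun s => ℓ (circuit (Φ ·) (fun _ : Fin n => s) v))
      (ℓ (∑ k : Fin n, (circuit (Φ ·) (shiftedAt t (π / 4) k) v
        - circuit (Φ ·) (shiftedAt t (-(π / 4)) k) v))) t := by
  obtain ⟨P, Q, R, hPQR⟩ := hΦ
  induction n generalizing ℓ with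
  | zero => simpa [circuit] using hasDerivAt_const t (ℓ v)
  | succ n ih =>
    have hsplit : ∀ δ, ∑ k : Fin (n + 1), circuit (Φ ·) (shiftedAt t δ k) v =
        Φ t (∑ k : Fin n, circuit (Φ ·) (shiftedAt t δ k) v)
          + Φ (t + δ) (circuit (Φ ·) (fun _ : Fin n => t) v) := fun δ => by
      simp only [Fin.sum_univ_castSucc, circuit_shiftedAt_castSucc, circuit_shiftedAt_last, map_sum]
    have hdiag : (fun s => ℓ (circuit (Φ ·) (fun _ : Fin (n + 1) => s) v)) =
        fun s => ℓ (Φ s (circuit (Φ ·) (fun _ : Fin n => s) v)) :=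
      funext fun s => congrArg ℓ (circuit_succ _ _ v)
    rw [hdiag, Finset.sum_sub_distrib, hsplit, hsplit]
    convert hasDerivAt_apply_apply_of_doubleAngle hPQR ih ℓ using 1
    simp only [map_sub, map_add, Finset.sum_sub_distrib, ← sub_eq_add_neg]
    abel

end ParameterShift

section ChannelStep

variable {n : Type*} [Fintype n] [DecidableEq n]

noncomputable def channelStep (H : Matrix n n ℂ) (Pc : Matrix n n ℂ →ₗ[ℂ] Matrix n n ℂ) (a : ℝ) :
    Matrix n n ℂ →ₗ[ℝ] Matrix n n ℂ :=
  (Pc ∘ₗ LinearMap.mulLeftRight ℂ (rotationGate H a, star (rotationGate H a))).restrictScalars ℝ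

theorem hasDoubleAngleForm_channelStep {H : Matrix n n ℂ} (hH : H.IsHermitian)
    (Pc : Matrix n n ℂ →ₗ[ℂ] Matrix n n ℂ) :
    HasDoubleAngleForm (channelStep H Pc) := by
  let HmH := LinearMap.mulLeftRight ℂ (H, H)
  refine ⟨(Pc ∘ₗ ((2⁻¹ : ℂ) • (LinearMap.id + HmH))).restrictScalars ℝ,
    (Pc ∘ₗ ((2⁻¹ : ℂ) • (LinearMap.id - HmH))).restrictScalars ℝ,
    (Pc ∘ₗ ((I / 2) • (LinearMap.mulRight ℂ H - LinearMap.mulLeft ℂ H))).restrictScalars ℝ,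
    fun a => LinearMap.ext fun m => ?_⟩
  simp [channelStep, rotationGate_mul_mul_star hH.isSelfAdjoint, HmH, ← Complex.coe_smul]

end ChannelStep

theorem zeno_parameter_shift_general {d N : ℕ}
    (H : Matrix (Fin d) (Fin d) ℂ) (hH : H.IsHermitian) (hH2 : H * H = 1)
    (Pc : Matrix (Fin d) (Fin d) ℂ →ₗ[ℂ] Matrix (Fin d) (Fin d) ℂ)
    (M ρ : Matrix (Fin d) (Fin d) ℂ)
    (evolve : (Fin N → ℝ) → Matrix (Fin d) (Fin d) ℂ)
    (hevolve : evolve = fun ang => Fin.foldl N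
      (fun σ j =>
        Pc ((NormedSpace.exp (((-(ang j : ℂ)) * Complex.I) • H)) * σ *
          (NormedSpace.exp (((-(ang j : ℂ)) * Complex.I) • H))ᴴ))
      ρ)
    (θ : ℝ) :
    HasDerivAt (fun t : ℝ => (M * evolve fun _ => t / N).trace)
      ((1 / N : ℂ) * ∑ k : Fin N,
        ((M * evolve fun j => θ / N + if j = k then Real.pi / 4 else 0).trace -
         (M * evolve fun j => θ / N + if j = k then -(Real.pi / 4) else 0).trace))
      θ := by
  have hcircuit : evolve = fun ang => circuit (channelStep H Pc ·) ang ρ := by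
    simp only [hevolve, exp_neg_mul_I_smul_eq_rotationGate hH2]
    rfl
  subst hcircuit
  let ℓ := ((Matrix.traceLinearMap (Fin d) ℂ ℂ).comp (LinearMap.mulLeft ℂ M)).restrictScalars ℝ
  have hstate := hasDerivAt_apply_circuit_const (hasDoubleAngleForm_channelStep hH Pc) N ρ (θ / N) ℓ
  have hscale : HasDerivAt (fun t : ℝ => t / N) (1 / N) θ := (hasDerivAt_id θ).div_const N
  refine (hstate.scomp θ hscale).congr_deriv ?_
  simp only [ℓ, map_sum, map_sub, LinearMap.restrictScalars_apply, LinearMap.comp_apply,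
    Matrix.traceLinearMap_apply, LinearMap.mulLeft_apply, Complex.real_smul]
  push_cast
  rfl

/-- **Parameter-shift rule for Zeno circuits.** Let `𝒰_Z(θ)` consist of `N` repetitions of
`e^{-i(θ/N)H}` (with `H` Hermitian and unitary, `H² = I`) each followed by a fixed linear
channel `𝒫`, applied to a state `ρ`. Then the derivative of `θ ↦ Tr[M 𝒰_Z(θ)ρ𝒰_Z†(θ)]`
equals `(1/N) Σ_{k=1}^N [⟨M⟩₊ₖ − ⟨M⟩₋ₖ]`, where `⟨M⟩₊ₖ` (resp. `⟨M⟩₋ₖ`) is the same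
expectation with the `k`-th occurrence of the `θ`-evolution shifted in angle by `+π/4`
(resp. `-π/4`), i.e., the standard `π/2` shift applied to the effective half-angle. -/
theorem zeno_parameter_shift {d N : ℕ} (hN : 1 ≤ N)
    (H : Matrix (Fin d) (Fin d) ℂ) (hH : H.IsHermitian) (hH2 : H * H = 1)
    (Pc : Matrix (Fin d) (Fin d) ℂ →ₗ[ℂ] Matrix (Fin d) (Fin d) ℂ)
    (M ρ : Matrix (Fin d) (Fin d) ℂ) (hM : M.IsHermitian)
    (evolve : (Fin N → ℝ) → Matrix (Fin d) (Fin d) ℂ)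
    (hevolve : evolve = fun ang => Fin.foldl N
      (fun σ j =>
        Pc ((NormedSpace.exp (((-(ang j : ℂ)) * Complex.I) • H)) * σ *
          (NormedSpace.exp (((-(ang j : ℂ)) * Complex.I) • H))ᴴ))
      ρ)
    (θ : ℝ) :
    HasDerivAt (fun t : ℝ => (M * evolve fun _ => t / N).trace)
      ((1 / N : ℂ) * ∑ k : Fin N,
        ((M * evolve fun j => θ / N + if j = k then Real.pi / 4 else 0).trace -
         (M * evolve fun j => θ / N + if j = k then -(Real.pi / 4) else 0).trace))
      θ :=
  zeno_parameter_shift_general H hH hH2 Pc M ρ evolve hevolve θ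
end
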